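/- Let λ ≥ 0, ε ≥ 0 with ε − λ < −1, and set μ_n = (1+n)(1 + log(1+n))^λ and ν_n = 1 + log(1+n). Then there exist positive constants θ₃ and θ₄ such that for every m ≥ 1: θ₃ (1 + log(1+m))^{−λ + ε + 1} ≤ Σ_{k=m}^∞ μ_k^{−1} ν_k^ε ≤ θ₄ (1 + log(1+m))^{−λ + ε + 1}, where μ_k^{−1} ν_k^ε = (1+k)^{−1} (1 + log(1+k))^{−λ + ε}. -/

import Mathlib

/-!
With `L x = 1 + log (1 + x)` and `p = ε - λ < -1`, the summand `(1 + k)⁻¹ L(k)^p` is comparable,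
up to constants depending only on `p`, to the decrement `L(k)^(p+1) - L(k+1)^(p+1)`: by the mean
value theorem this decrement is `-(p+1) c^p (L(k+1) - L(k))` for some `c` between `L(k)` and
`L(k+1) ≤ 2 L(k)`, while `L(k+1) - L(k) = log (1 + (1 + k)⁻¹)` lies between `(2 + k)⁻¹` and
`(1 + k)⁻¹`. Since `L(k)^(p+1) → 0`, the decrements telescope over the tail to `L(m)^(p+1)`.
-/

open Real Filter Topology

section Telescoping

theorem hasSum_sub_succ_of_antitone {G : ℕ → ℝ} (hG : Antitone G)
    (hlim : Tendsto G atTop (𝓝 0)) : HasSum (fun n => G n - G (n + 1)) (G 0) := by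
  rw [hasSum_iff_tendsto_nat_of_nonneg fun n => sub_nonneg.2 (hG n.le_succ)]
  simp_rw [Finset.sum_range_sub']
  simpa using tendsto_const_nhds.sub hlim

variable {f G : ℕ → ℝ} {c₁ c₂ : ℝ}

theorem summable_and_tsum_bounds_of_sub_succ_bounds (hc₁ : 0 < c₁) (hc₂ : 0 < c₂)
    (hf : ∀ n, 0 ≤ f n) (hlim : Tendsto G atTop (𝓝 0))
    (hlo : ∀ n, c₁ * f n ≤ G n - G (n + 1)) (hhi : ∀ n, G n - G (n + 1) ≤ c₂ * f n) :
    Summable f ∧ c₂⁻¹ * G 0 ≤ ∑' n, f n ∧ ∑' n, f n ≤ c₁⁻¹ * G 0 := by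
  have hG : Antitone G := antitone_nat_of_succ_le fun n => by
    linarith [hlo n, mul_nonneg hc₁.le (hf n)]
  have htel := hasSum_sub_succ_of_antitone hG hlim
  have hsum : Summable f :=
    .of_nonneg_of_le hf (fun n => (le_inv_mul_iff₀ hc₁).2 (hlo n)) (htel.summable.mul_left c₁⁻¹)
  refine ⟨hsum, (inv_mul_le_iff₀ hc₂).2 ?_, (le_inv_mul_iff₀ hc₁).2 ?_⟩
  · rw [← tsum_mul_left, ← htel.tsum_eq]
    exact htel.summable.tsum_le_tsum hhi (hsum.mul_left c₂)
  · rw [← tsum_mul_left, ← htel.tsum_eq]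
    exact (hsum.mul_left c₁).tsum_le_tsum hlo htel.summable

def Nat.addLeftEquivSubtypeLe (m : ℕ) : ℕ ≃ {k : ℕ // m ≤ k} where
  toFun n := ⟨m + n, Nat.le_add_right m n⟩
  invFun k := k.1 - m
  left_inv n := Nat.add_sub_cancel_left m n
  right_inv k := Subtype.ext (Nat.add_sub_cancel' k.2)

theorem tail_summable_and_tsum_bounds_of_sub_succ_bounds (hc₁ : 0 < c₁) (hc₂ : 0 < c₂)
    (hf : ∀ n, 0 ≤ f n) (hlim : Tendsto G atTop (𝓝 0))
    (hlo : ∀ n, c₁ * f n ≤ G n - G (n + 1)) (hhi : ∀ n, G n - G (n + 1) ≤ c₂ * f n) (m : ℕ) :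
    Summable (fun k : {k : ℕ // m ≤ k} => f k) ∧
      c₂⁻¹ * G m ≤ ∑' k : {k : ℕ // m ≤ k}, f k ∧ ∑' k : {k : ℕ // m ≤ k}, f k ≤ c₁⁻¹ * G m := by
  have hshift := summable_and_tsum_bounds_of_sub_succ_bounds (f := fun n => f (m + n))
    (G := fun n => G (m + n)) hc₁ hc₂ (fun _ => hf _)
    (hlim.comp ((tendsto_add_atTop_nat m).congr fun n => add_comm n m))
    (fun _ => hlo _) (fun _ => hhi _)
  rw [← (Nat.addLeftEquivSubtypeLe m).summable_iff, ← (Nat.addLeftEquivSubtypeLe m).tsum_eq]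
  exact hshift

end Telescoping

theorem rpow_sub_rpow_bounds_of_nonpos {q a b : ℝ} (hq : q ≤ 0) (ha : 0 < a) (hab : a < b) :
    -q * b ^ (q - 1) * (b - a) ≤ a ^ q - b ^ q ∧ a ^ q - b ^ q ≤ -q * a ^ (q - 1) * (b - a) := by
  have hderiv : ∀ x, 0 < x → HasDerivAt (fun x : ℝ => x ^ q) (q * x ^ (q - 1)) x :=
    fun x hx => hasDerivAt_rpow_const (.inl hx.ne')
  obtain ⟨c, ⟨hac, hcb⟩, hc⟩ := exists_hasDerivAt_eq_slope (fun x : ℝ => x ^ q) _ hab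
    (fun x hx => (hderiv x (ha.trans_le hx.1)).continuousAt.continuousWithinAt)
    (fun x hx => hderiv x (ha.trans hx.1))
  have hmvt : a ^ q - b ^ q = -q * c ^ (q - 1) * (b - a) := by
    rw [eq_div_iff (sub_pos.2 hab).ne'] at hc
    linarith
  have hq1 : q - 1 ≤ 0 := by linarith
  have hnq : 0 ≤ -q := neg_nonneg.2 hq
  rw [hmvt]
  constructor <;> gcongr -q * ?_ * _
  exacts [rpow_le_rpow_of_nonpos (ha.trans hac) hcb.le hq1, rpow_le_rpow_of_nonpos ha hac.le hq1]

theorem inv_add_one_le_log_add_one_sub_log {y : ℝ} (hy : 0 < y) :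
    (y + 1)⁻¹ ≤ log (y + 1) - log y := by
  have h := one_sub_inv_le_log_of_pos (by positivity : 0 < (y + 1) / y)
  rw [log_div (by positivity) hy.ne', inv_div] at h
  calc (y + 1)⁻¹ = 1 - y / (y + 1) := by field_simp; ring
    _ ≤ _ := h

theorem log_add_one_sub_log_le_inv {y : ℝ} (hy : 0 < y) : log (y + 1) - log y ≤ y⁻¹ := by
  have h := log_le_sub_one_of_pos (by positivity : 0 < (y + 1) / y)
  rw [log_div (by positivity) hy.ne'] at h
  calc _ ≤ (y + 1) / y - 1 := h
    _ = y⁻¹ := by field_simp; ring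

noncomputable def logGrowth (x : ℝ) : ℝ := 1 + log (1 + x)

theorem one_le_logGrowth {x : ℝ} (hx : 0 ≤ x) : 1 ≤ logGrowth x := by
  unfold logGrowth
  linarith [log_nonneg (by linarith : (1 : ℝ) ≤ 1 + x)]

theorem logGrowth_add_one_le_two_mul {x : ℝ} (hx : 0 ≤ x) :
    logGrowth (x + 1) ≤ 2 * logGrowth x := by
  have h := log_add_one_sub_log_le_inv (by linarith : 0 < 1 + x)
  have hinv : (1 + x)⁻¹ ≤ 1 := inv_le_one_of_one_le₀ (by linarith)
  have hnonneg := log_nonneg (by linarith : (1 : ℝ) ≤ 1 + x)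
  unfold logGrowth
  rw [show 1 + (x + 1) = 1 + x + 1 by ring]
  linarith

theorem tendsto_logGrowth_atTop : Tendsto logGrowth atTop atTop :=
  tendsto_atTop_add_const_left _ 1
    (tendsto_log_atTop.comp (tendsto_atTop_add_const_left _ 1 tendsto_id))

theorem logGrowth_rpow_sub_succ_bounds {p : ℝ} (hp : p ≤ -1) {x : ℝ} (hx : 0 ≤ x) :
    -(p + 1) * 2 ^ p / 2 * ((1 + x)⁻¹ * logGrowth x ^ p) ≤
        logGrowth x ^ (p + 1) - logGrowth (x + 1) ^ (p + 1) ∧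
      logGrowth x ^ (p + 1) - logGrowth (x + 1) ^ (p + 1) ≤
        -(p + 1) * ((1 + x)⁻¹ * logGrowth x ^ p) := by
  set a := logGrowth x
  set b := logGrowth (x + 1)
  have ha : 0 < a := zero_lt_one.trans_le (one_le_logGrowth hx)
  have hdiff : b - a = log (1 + x + 1) - log (1 + x) := by
    simp only [a, b, logGrowth]; ring_nf
  have hlo : (2 * (1 + x))⁻¹ ≤ b - a := by
    rw [hdiff]
    refine le_trans ?_ (inv_add_one_le_log_add_one_sub_log (by linarith))
    gcongr; linarith
  have hhi : b - a ≤ (1 + x)⁻¹ := hdiff ▸ log_add_one_sub_log_le_inv (by linarith)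
  have hab : a < b := sub_pos.1 ((by positivity : (0 : ℝ) < (2 * (1 + x))⁻¹).trans_le hlo)
  have hb : 2 ^ p * a ^ p ≤ b ^ p := by
    rw [← mul_rpow zero_le_two ha.le]
    exact rpow_le_rpow_of_nonpos (ha.trans hab) (logGrowth_add_one_le_two_mul hx) (by linarith)
  obtain ⟨hmvt_lo, hmvt_hi⟩ := rpow_sub_rpow_bounds_of_nonpos (q := p + 1) (by linarith) ha hab
  rw [add_sub_cancel_right] at hmvt_lo hmvt_hi
  have hq : 0 ≤ -(p + 1) := by linarith
  constructor
  · calc -(p + 1) * 2 ^ p / 2 * ((1 + x)⁻¹ * a ^ p)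
        = -(p + 1) * (2 ^ p * a ^ p) * (2 * (1 + x))⁻¹ := by rw [mul_inv]; ring
      _ ≤ -(p + 1) * b ^ p * (b - a) := by
        gcongr -(p + 1) * ?_ * ?_
        exact mul_nonneg hq (rpow_nonneg (ha.trans hab).le p)
      _ ≤ _ := hmvt_lo
  · calc _ ≤ -(p + 1) * a ^ p * (b - a) := hmvt_hi
      _ ≤ -(p + 1) * a ^ p * (1 + x)⁻¹ := by gcongr
      _ = _ := by ring

theorem log_example_tail_estimates_critical_general (lam ε : ℝ)
    (h : ε - lam < -1) :
    ∃ θ₃ θ₄ : ℝ, 0 < θ₃ ∧ 0 < θ₄ ∧ ∀ m : ℕ, 1 ≤ m →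
      Summable (fun k : {k : ℕ // m ≤ k} =>
        ((1 : ℝ) + (k.1 : ℝ))⁻¹ * (1 + Real.log (1 + (k.1 : ℝ))) ^ (-lam + ε)) ∧
      θ₃ * (1 + Real.log (1 + (m : ℝ))) ^ (-lam + ε + 1) ≤
        ∑' k : {k : ℕ // m ≤ k},
          ((1 : ℝ) + (k.1 : ℝ))⁻¹ * (1 + Real.log (1 + (k.1 : ℝ))) ^ (-lam + ε) ∧
      ∑' k : {k : ℕ // m ≤ k},
          ((1 : ℝ) + (k.1 : ℝ))⁻¹ * (1 + Real.log (1 + (k.1 : ℝ))) ^ (-lam + ε) ≤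
        θ₄ * (1 + Real.log (1 + (m : ℝ))) ^ (-lam + ε + 1) := by
  set p := -lam + ε
  have hq : 0 < -(p + 1) := by linarith
  have hc₁ : 0 < -(p + 1) * 2 ^ p / 2 := by positivity
  have hstep (n : ℕ) := logGrowth_rpow_sub_succ_bounds (p := p) (by linarith) n.cast_nonneg
  have hlim : Tendsto (fun n : ℕ => logGrowth n ^ (p + 1)) atTop (𝓝 0) := by
    have := (tendsto_rpow_neg_atTop hq).comp
      (tendsto_logGrowth_atTop.comp tendsto_natCast_atTop_atTop)
    simpa only [neg_neg, Function.comp_def] using this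
  refine ⟨(-(p + 1))⁻¹, (-(p + 1) * 2 ^ p / 2)⁻¹, inv_pos.2 hq, inv_pos.2 hc₁, fun m _ => ?_⟩
  exact tail_summable_and_tsum_bounds_of_sub_succ_bounds
    (f := fun n : ℕ => (1 + (n : ℝ))⁻¹ * logGrowth n ^ p) (G := fun n : ℕ => logGrowth n ^ (p + 1))
    hc₁ hq
    (fun n => by have := one_le_logGrowth n.cast_nonneg; positivity) hlim
    (fun n => by simpa using (hstep n).1) (fun n => by simpa using (hstep n).2) m

/-- two-sided tail estimates in the logarithmic example when `aq = -1`
and `ε - λ < -1`. -/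
theorem log_example_tail_estimates_critical (lam ε : ℝ)
    (hlam : 0 ≤ lam) (hε : 0 ≤ ε) (h : ε - lam < -1) :
    ∃ θ₃ θ₄ : ℝ, 0 < θ₃ ∧ 0 < θ₄ ∧ ∀ m : ℕ, 1 ≤ m →
      Summable (fun k : {k : ℕ // m ≤ k} =>
        ((1 : ℝ) + (k.1 : ℝ))⁻¹ * (1 + Real.log (1 + (k.1 : ℝ))) ^ (-lam + ε)) ∧
      θ₃ * (1 + Real.log (1 + (m : ℝ))) ^ (-lam + ε + 1) ≤
        ∑' k : {k : ℕ // m ≤ k},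
          ((1 : ℝ) + (k.1 : ℝ))⁻¹ * (1 + Real.log (1 + (k.1 : ℝ))) ^ (-lam + ε) ∧
      ∑' k : {k : ℕ // m ≤ k},
          ((1 : ℝ) + (k.1 : ℝ))⁻¹ * (1 + Real.log (1 + (k.1 : ℝ))) ^ (-lam + ε) ≤
        θ₄ * (1 + Real.log (1 + (m : ℝ))) ^ (-lam + ε + 1) :=
  log_example_tail_estimates_critical_general lam ε h
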